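/- arXiv:2402.13381 — 7 statements merged into one kernel-verified Lean document; each statement's English description precedes it below -/
import Mathlib

section
/- Let T be a TSS matrix on a connected acyclic undirected graph G = (V,E) with rank profile ρ : E → ℕ (so T admits a TSS representation on G with edge dimensions ρ). Then (T,G) satisfies the graph-induced rank structure (GIRS) property with constant c = max_{e ∈ E} ρ(e); that is, for every subset A ⊆ V, rank T⟨Ā,A⟩ ≤ (max_{e∈E} ρ(e)) · E(A), where E(A) is the number of border edges of A. -/
/-! A path from `j ∈ A` to `i ∉ A` in the tree leaves `A` for the last time along exactly one
border edge `(a, b)`, and there its TSS product factors as the `Out`/`Trans` chain along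
`b → i` times the `Trans`/`Inp` chain along `j → a`, through `F^{ρ(a,b)}`. Whether the path
from `j` to `i` exits through `(a, b)` splits into a condition on `i` alone (the path `b → i`
avoids `A`) and one on `j` alone (the path `j → a` avoids `b`), so `T⟨Ā,A⟩` is a sum over the
border edges of products of rank at most `ρ(a, b)`. -/

open Matrix

attribute [local instance] Classical.propDecidable

namespace TSS

variable {F : Type*} [Field F] {V : Type*} [Fintype V] [DecidableEq V]

/-- The `(i,j)` block of a graph-partitioned matrix. -/
def blockOf {m n : V → ℕ} (T : Matrix ((i : V) × Fin (m i)) ((j : V) × Fin (n j)) F)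
    (i j : V) : Matrix (Fin (m i)) (Fin (n j)) F :=
  fun a b => T ⟨i, a⟩ ⟨j, b⟩

/-- The submatrix `T⟨A,B⟩` of a graph-partitioned matrix. -/
def subBlock {m n : V → ℕ} (T : Matrix ((i : V) × Fin (m i)) ((j : V) × Fin (n j)) F)
    (A B : Set V) :
    Matrix {p : (i : V) × Fin (m i) // p.1 ∈ A} {q : (j : V) × Fin (n j) // q.1 ∈ B} F :=
  T.submatrix (fun p => p.1) (fun q => q.1)

/-- The Hankel block `T⟨Ā,A⟩` induced by `A`. -/
def hankelBlock {m n : V → ℕ} (T : Matrix ((i : V) × Fin (m i)) ((j : V) × Fin (n j)) F)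
    (A : Set V) :
    Matrix {p : (i : V) × Fin (m i) // p.1 ∈ Aᶜ} {q : (j : V) × Fin (n j) // q.1 ∈ A} F :=
  subBlock T Aᶜ A

/-- The number of border edges of `A`: edges of `G` with one endpoint in `A` and the other
outside of `A` (each such undirected edge is counted once, via its orientation out of `A`). -/
noncomputable def edgeCount (G : SimpleGraph V) (A : Set V) : ℕ :=
  Nat.card {e : V × V // e.1 ∈ A ∧ e.2 ∉ A ∧ G.Adj e.1 e.2}

/-- The vertex set of the connected component containing `i` after deleting the edge `{i,j}`. -/
def side (G : SimpleGraph V) (i j : V) : Set V :=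
  {v | (G.deleteEdges {s(i, j)}).Reachable i v}

/-- The unit Hankel block associated with the directed edge `(i,j)`. -/
def unitHankel (G : SimpleGraph V) {m n : V → ℕ}
    (T : Matrix ((i : V) × Fin (m i)) ((j : V) × Fin (n j)) F) (i j : V) :=
  hankelBlock T (side G i j)

/-- `outChain Out Trans k i w j` is the product
`Out^i_{p_{ν−1}} · Trans^{p_{ν−1}}_{i,p_{ν−2}} ⋯ Trans^{k}_{p₁,j}` along the walk
`w : k = p₀ − p₁ − ⋯ − p_ν = i`, with incoming edge `(j,k)`. -/
noncomputable def outChain {G : SimpleGraph V} {m : V → ℕ} {ρ : V → V → ℕ}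
    (Out : ∀ k i : V, Matrix (Fin (m k)) (Fin (ρ i k)) F)
    (Trans : ∀ k i j : V, Matrix (Fin (ρ k i)) (Fin (ρ j k)) F) :
    ∀ (k i : V), G.Walk k i → ∀ j : V, Matrix (Fin (m i)) (Fin (ρ j k)) F
  | k, _, .nil, j => Out k j
  | k, _, .cons (v := k') _ w, j => outChain Out Trans k' _ w k * Trans k k' j

/-- `pathMatrix Inp Trans Out j i w` is the product
`Out^i_{p_{ν−1}} · Trans^{p_{ν−1}}_{i,p_{ν−2}} ⋯ Trans^{p₁}_{p₂,j} · Inp^j_{p₁}` along the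
walk `w : j = p₀ − p₁ − ⋯ − p_ν = i` (and junk `0` for the empty walk). -/
noncomputable def pathMatrix {G : SimpleGraph V} {m n : V → ℕ} {ρ : V → V → ℕ}
    (Inp : ∀ k j : V, Matrix (Fin (ρ k j)) (Fin (n k)) F)
    (Trans : ∀ k i j : V, Matrix (Fin (ρ k i)) (Fin (ρ j k)) F)
    (Out : ∀ k i : V, Matrix (Fin (m k)) (Fin (ρ i k)) F) :
    ∀ (j i : V), G.Walk j i → Matrix (Fin (m i)) (Fin (n j)) F
  | _, _, .nil => 0
  | j, i, .cons (v := p1) _ w => outChain Out Trans p1 i w j * Inp j p1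

/-- A TSS representation of the graph-partitioned matrix `T` on the tree `G`, with
output dimensions `m`, input dimensions `n` and rank profile `ρ` (only the values of the
generators and of `ρ` on (pairs of adjoining) directed edges of `G` are relevant). -/
structure TSSRepr (G : SimpleGraph V) (m n : V → ℕ) (ρ : V → V → ℕ)
    (T : Matrix ((i : V) × Fin (m i)) ((j : V) × Fin (n j)) F) where
  D : ∀ k : V, Matrix (Fin (m k)) (Fin (n k)) F
  Inp : ∀ k j : V, Matrix (Fin (ρ k j)) (Fin (n k)) F
  Trans : ∀ k i j : V, Matrix (Fin (ρ k i)) (Fin (ρ j k)) F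
  Out : ∀ k i : V, Matrix (Fin (m k)) (Fin (ρ i k)) F
  diag : ∀ i : V, blockOf T i i = D i
  offdiag : ∀ {i j : V}, i ≠ j → ∀ w : G.Walk j i, w.IsPath →
      blockOf T i j = pathMatrix Inp Trans Out j i w

end TSS

namespace Matrix

variable {F : Type*} [Field F] {α β : Type*} [Fintype β]

theorem rank_add_le (M N : Matrix α β F) : (M + N).rank ≤ M.rank + N.rank := by
  rw [rank, rank, rank, mulVecLin_add]
  have hrange : LinearMap.range (M.mulVecLin + N.mulVecLin) ≤
      LinearMap.range M.mulVecLin ⊔ LinearMap.range N.mulVecLin := by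
    rintro x ⟨y, rfl⟩
    exact Submodule.add_mem_sup (LinearMap.mem_range_self _ y) (LinearMap.mem_range_self _ y)
  exact (Submodule.finrank_mono hrange).trans (Submodule.finrank_add_le_finrank_add_finrank _ _)

theorem rank_sum_le {ι : Type*} (s : Finset ι) (M : ι → Matrix α β F) :
    (∑ e ∈ s, M e).rank ≤ ∑ e ∈ s, (M e).rank := by
  induction s using Finset.induction with
  | empty => simp
  | insert e s he ih =>
    rw [Finset.sum_insert he, Finset.sum_insert he]
    exact (rank_add_le _ _).trans (add_le_add le_rfl ih)

end Matrix

namespace SimpleGraph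

variable {V : Type*} {G : SimpleGraph V}

def Walk.IsLastExit (A : Set V) {j i : V} (w : G.Walk j i) (a b : V) : Prop :=
  ∃ (hab : G.Adj a b) (w₁ : G.Walk j a) (w₂ : G.Walk b i),
    w = w₁.append (.cons hab w₂) ∧ a ∈ A ∧ ∀ v ∈ w₂.support, v ∉ A

theorem Walk.support_subset_compl_or_exists_isLastExit (A : Set V) {j i : V}
    (w : G.Walk j i) (hi : i ∉ A) :
    (∀ v ∈ w.support, v ∉ A) ∨ ∃ a b, w.IsLastExit A a b := by
  induction w with
  | nil => exact .inl (by simpa using hi)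
  | @cons j p i h w ih =>
    rcases ih hi with hw | ⟨a, b, hab, w₁, w₂, rfl, ha, hw₂⟩
    · by_cases hj : j ∈ A
      · exact .inr ⟨j, p, h, .nil, w, rfl, hj, hw⟩
      · left
        simpa [Walk.support_cons, hj] using hw
    · exact .inr ⟨a, b, hab, .cons h w₁, w₂, rfl, ha, hw₂⟩

theorem Walk.IsLastExit.unique {A : Set V} {j i : V} {w : G.Walk j i} {a b a' b' : V}
    (h : w.IsLastExit A a b) (h' : w.IsLastExit A a' b') : a = a' ∧ b = b' := by
  obtain ⟨hab, w₁, w₂, rfl, ha, hw₂⟩ := h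
  obtain ⟨hab', w₁', w₂', heq, ha', hw₂'⟩ := h'
  induction w₁ with
  | nil =>
    cases w₁' with
    | nil =>
      simp only [Walk.nil_append, Walk.cons.injEq] at heq
      exact ⟨rfl, heq.1⟩
    | cons h y =>
      simp only [Walk.nil_append, Walk.cons_append, Walk.cons.injEq] at heq
      obtain ⟨rfl, hw⟩ := heq
      refine (hw₂ a' ?_ ha').elim
      rw [eq_of_heq hw]
      simp
  | cons h w ih =>
    cases w₁' with
    | nil =>
      simp only [Walk.nil_append, Walk.cons_append, Walk.cons.injEq] at heq
      obtain ⟨rfl, hw⟩ := heq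
      refine (hw₂' _ ?_ ha).elim
      rw [← eq_of_heq hw]
      simp
    | cons h' y =>
      simp only [Walk.cons_append, Walk.cons.injEq] at heq
      obtain ⟨rfl, hw⟩ := heq
      exact ih hab ha y (eq_of_heq hw)

theorem IsAcyclic.isPath_append_cons (hG : G.IsAcyclic) {j a b i : V} (hab : G.Adj a b)
    {w₁ : G.Walk j a} {w₂ : G.Walk b i} (h₁ : w₁.IsPath) (h₂ : w₂.IsPath)
    (hb : b ∉ w₁.support) (ha : a ∉ w₂.support) :
    (w₁.append (.cons hab w₂)).IsPath := by
  rw [Walk.isPath_def, Walk.support_append, Walk.support_cons, List.tail_cons,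
    List.nodup_append]
  refine ⟨h₁.support_nodup, h₂.support_nodup, ?_⟩
  rintro v hv₁ _ hv₂ rfl
  -- a common vertex `v` would give a walk `a → v → b` avoiding the bridge `ab`
  have hbridge := (isBridge_iff_forall_walk_mem_edges.1
    (isAcyclic_iff_forall_isBridge.1 hG (G.mem_edgeSet.2 hab)))
    ((w₁.dropUntil v hv₁).reverse.append (w₂.takeUntil v hv₂).reverse)
  rw [Walk.edges_append, List.mem_append, Walk.edges_reverse, Walk.edges_reverse,
    List.mem_reverse, List.mem_reverse] at hbridge
  rcases hbridge with hmem | hmem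
  · exact hb <| w₁.support_dropUntil_subset_support hv₁ <|
      Walk.snd_mem_support_of_mem_edges _ hmem
  · exact ha <| w₂.support_takeUntil_subset_support hv₂ <|
      Walk.fst_mem_support_of_mem_edges _ hmem

noncomputable def IsTree.path (hG : G.IsTree) (i j : V) : G.Walk i j :=
  (hG.existsUnique_path i j).exists.choose

theorem IsTree.isPath_path (hG : G.IsTree) (i j : V) : (hG.path i j).IsPath :=
  (hG.existsUnique_path i j).exists.choose_spec

theorem IsTree.path_eq (hG : G.IsTree) {i j : V} {w : G.Walk i j} (hw : w.IsPath) :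
    hG.path i j = w :=
  (hG.existsUnique_path i j).unique (hG.isPath_path i j) hw

end SimpleGraph

namespace TSS

variable {F : Type*} [Field F] {V : Type*}

section TreeFactorization

open SimpleGraph

variable {G : SimpleGraph V}

/-- `Trans^a_{b,·}` as an `Out`-family of constant output dimension `ρ a b` (zero away from
the node `a`), so that `outChain` also builds the products `Trans^a_{b,·} ⋯ Trans^k_{·,j}`. -/
noncomputable def transAsOut (ρ : V → V → ℕ)
    (Trans : ∀ k i j : V, Matrix (Fin (ρ k i)) (Fin (ρ j k)) F) (a b : V) :
    ∀ k j : V, Matrix (Fin (ρ a b)) (Fin (ρ j k)) F :=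
  fun k j => if h : k = a then h ▸ Trans a b j else 0

theorem transAsOut_self (ρ : V → V → ℕ)
    (Trans : ∀ k i j : V, Matrix (Fin (ρ k i)) (Fin (ρ j k)) F) (a b j : V) :
    transAsOut ρ Trans a b a j = Trans a b j := by
  simp [transAsOut]

/-- The product `Trans^a_{b,·} ⋯ Trans^{p₁}_{p₂,j} · Inp^j_{p₁}` along the walk
`w : j = p₀ − p₁ − ⋯ − p_ν = a`, and `Inp^a_b` for the empty walk. -/
noncomputable def inpChain {n : V → ℕ} {ρ : V → V → ℕ}
    (Inp : ∀ k j : V, Matrix (Fin (ρ k j)) (Fin (n k)) F)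
    (Trans : ∀ k i j : V, Matrix (Fin (ρ k i)) (Fin (ρ j k)) F) (a b : V) :
    ∀ j : V, G.Walk j a → Matrix (Fin (ρ a b)) (Fin (n j)) F
  | _, .nil => Inp a b
  | j, .cons (v := p) _ w =>
      outChain (m := fun _ => ρ a b) (transAsOut ρ Trans a b) Trans p a w j * Inp j p

theorem outChain_append_cons {m : V → ℕ} {ρ : V → V → ℕ}
    (Out : ∀ k i : V, Matrix (Fin (m k)) (Fin (ρ i k)) F)
    (Trans : ∀ k i j : V, Matrix (Fin (ρ k i)) (Fin (ρ j k)) F)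
    {k a b i : V} (hab : G.Adj a b) (w₁ : G.Walk k a) (w₂ : G.Walk b i) (j : V) :
    outChain Out Trans k i (w₁.append (.cons hab w₂)) j =
      outChain Out Trans b i w₂ a *
        outChain (m := fun _ => ρ a b) (transAsOut ρ Trans a b) Trans k a w₁ j := by
  induction w₁ generalizing j with
  | nil => simp [outChain, transAsOut_self]
  | cons h w ih => rw [Walk.cons_append, outChain, outChain, ih, Matrix.mul_assoc]

theorem pathMatrix_append_cons {m n : V → ℕ} {ρ : V → V → ℕ}
    (Inp : ∀ k j : V, Matrix (Fin (ρ k j)) (Fin (n k)) F)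
    (Trans : ∀ k i j : V, Matrix (Fin (ρ k i)) (Fin (ρ j k)) F)
    (Out : ∀ k i : V, Matrix (Fin (m k)) (Fin (ρ i k)) F)
    {j a b i : V} (hab : G.Adj a b) (w₁ : G.Walk j a) (w₂ : G.Walk b i) :
    pathMatrix Inp Trans Out j i (w₁.append (.cons hab w₂)) =
      outChain Out Trans b i w₂ a * inpChain Inp Trans a b j w₁ := by
  cases w₁ with
  | nil => simp [pathMatrix, inpChain]
  | cons h w =>
    rw [Walk.cons_append, pathMatrix, inpChain, outChain_append_cons, Matrix.mul_assoc]

variable {m n : V → ℕ} {ρ : V → V → ℕ}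
  {T : Matrix ((i : V) × Fin (m i)) ((j : V) × Fin (n j)) F}

noncomputable def exitOut (hG : G.IsTree) (r : TSSRepr G m n ρ T) (A : Set V) (e : V × V) :
    Matrix {p : (i : V) × Fin (m i) // p.1 ∈ Aᶜ} (Fin (ρ e.1 e.2)) F :=
  fun p z =>
    if ∀ v ∈ (hG.path e.2 p.1.1).support, v ∉ A then
      outChain r.Out r.Trans e.2 p.1.1 (hG.path e.2 p.1.1) e.1 p.1.2 z
    else 0

noncomputable def exitInp (hG : G.IsTree) (r : TSSRepr G m n ρ T) (A : Set V) (e : V × V) :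
    Matrix (Fin (ρ e.1 e.2)) {q : (j : V) × Fin (n j) // q.1 ∈ A} F :=
  fun z q =>
    if e.2 ∉ (hG.path q.1.1 e.1).support then
      inpChain r.Inp r.Trans e.1 e.2 q.1.1 (hG.path q.1.1 e.1) z q.1.2
    else 0

theorem exitOut_mul_exitInp_apply_of_isLastExit (hG : G.IsTree) (r : TSSRepr G m n ρ T)
    {A : Set V} {a b : V} (p : {p : (i : V) × Fin (m i) // p.1 ∈ Aᶜ})
    (q : {q : (j : V) × Fin (n j) // q.1 ∈ A})
    (hexit : (hG.path q.1.1 p.1.1).IsLastExit A a b) :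
    (exitOut hG r A (a, b) * exitInp hG r A (a, b)) p q =
      pathMatrix r.Inp r.Trans r.Out q.1.1 p.1.1 (hG.path q.1.1 p.1.1) p.1.2 q.1.2 := by
  obtain ⟨hab, w₁, w₂, hpath, -, hw₂⟩ := hexit
  have hP : (w₁.append (.cons hab w₂)).IsPath := hpath ▸ hG.isPath_path _ _
  have hb : b ∉ w₁.support := by
    have hnodup := hP.support_nodup
    rw [Walk.support_append, Walk.support_cons, List.tail_cons] at hnodup
    exact fun hb => List.disjoint_of_nodup_append hnodup hb w₂.start_mem_support
  have h₁ : hG.path q.1.1 a = w₁ := hG.path_eq hP.of_append_left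
  have h₂ : hG.path b p.1.1 = w₂ := hG.path_eq hP.of_append_right.of_cons
  simp only [Matrix.mul_apply, exitOut, exitInp, h₁, h₂, if_pos hw₂, if_pos hb]
  rw [hpath, pathMatrix_append_cons, Matrix.mul_apply]

theorem isLastExit_of_exitOut_mul_exitInp_apply_ne_zero (hG : G.IsTree)
    (r : TSSRepr G m n ρ T) {A : Set V} {e : V × V} (ha : e.1 ∈ A) (hab : G.Adj e.1 e.2)
    (p : {p : (i : V) × Fin (m i) // p.1 ∈ Aᶜ}) (q : {q : (j : V) × Fin (n j) // q.1 ∈ A})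
    (hne : (exitOut hG r A e * exitInp hG r A e) p q ≠ 0) :
    (hG.path q.1.1 p.1.1).IsLastExit A e.1 e.2 := by
  have hout : ∀ v ∈ (hG.path e.2 p.1.1).support, v ∉ A := by
    by_contra h
    exact hne (by simp [Matrix.mul_apply, exitOut, h])
  have hinp : e.2 ∉ (hG.path q.1.1 e.1).support := by
    intro h
    exact hne (by simp [Matrix.mul_apply, exitInp, h])
  have hP := hG.isAcyclic.isPath_append_cons hab (hG.isPath_path _ _) (hG.isPath_path _ _)
    hinp (fun h => hout _ h ha)
  exact ⟨hab, _, _, hG.path_eq hP, ha, hout⟩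

variable [Fintype V]

noncomputable def borderEdges (G : SimpleGraph V) (A : Set V) : Finset (V × V) :=
  Finset.univ.filter fun e => e.1 ∈ A ∧ e.2 ∉ A ∧ G.Adj e.1 e.2

theorem card_borderEdges (G : SimpleGraph V) (A : Set V) :
    (borderEdges G A).card = edgeCount G A := by
  rw [edgeCount, Nat.card_eq_fintype_card, Fintype.card_subtype, borderEdges]

theorem hankelBlock_eq_sum_exitOut_mul_exitInp (hG : G.IsTree) (r : TSSRepr G m n ρ T)
    (A : Set V) :
    hankelBlock T A = ∑ e ∈ borderEdges G A, exitOut hG r A e * exitInp hG r A e := by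
  ext p q
  obtain ⟨⟨i, x⟩, hi⟩ := p
  obtain ⟨⟨j, y⟩, hj⟩ := q
  obtain ⟨a, b, hexit⟩ : ∃ a b, (hG.path j i).IsLastExit A a b :=
    ((hG.path j i).support_subset_compl_or_exists_isLastExit A hi).resolve_left
      fun h => h j (Walk.start_mem_support _) hj
  have hborder : (a, b) ∈ borderEdges G A := by
    obtain ⟨hab, -, w₂, -, ha, hw₂⟩ := hexit
    simpa [borderEdges] using ⟨ha, hw₂ b w₂.start_mem_support, hab⟩
  have hij : i ≠ j := by rintro rfl; exact hi hj
  rw [Matrix.sum_apply, Finset.sum_eq_single_of_mem (a, b) hborder,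
    exitOut_mul_exitInp_apply_of_isLastExit hG r _ _ hexit]
  · exact congrFun₂ (r.offdiag hij _ (hG.isPath_path j i)) x y
  · intro e he hne
    simp only [borderEdges, Finset.mem_filter] at he
    by_contra hnz
    obtain ⟨rfl, rfl⟩ :=
      (isLastExit_of_exitOut_mul_exitInp_apply_ne_zero hG r he.2.1 he.2.2.2 _ _ hnz).unique hexit
    exact hne rfl

end TreeFactorization

theorem tss_satisfies_girs_general {F : Type*} [Field F] {V : Type*} [Fintype V]
    (G : SimpleGraph V) (hG : G.IsTree) (m n : V → ℕ) (ρ : V → V → ℕ)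
    (T : Matrix ((i : V) × Fin (m i)) ((j : V) × Fin (n j)) F)
    (hT : Nonempty (TSSRepr G m n ρ T)) (A : Set V) :
    (hankelBlock T A).rank ≤
      ((Finset.univ.filter (fun e : V × V => G.Adj e.1 e.2)).sup (fun e => ρ e.1 e.2))
        * edgeCount G A := by
  obtain ⟨r⟩ := hT
  rw [hankelBlock_eq_sum_exitOut_mul_exitInp hG r A, ← card_borderEdges, mul_comm,
    ← smul_eq_mul, ← Finset.sum_const]
  refine (Matrix.rank_sum_le _ _).trans (Finset.sum_le_sum fun e he => ?_)
  have hadj : G.Adj e.1 e.2 := (Finset.mem_filter.1 he).2.2.2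
  calc (exitOut hG r A e * exitInp hG r A e).rank ≤ ρ e.1 e.2 :=
        (Matrix.rank_mul_le_left _ _).trans
          ((Matrix.rank_le_card_width _).trans_eq (Fintype.card_fin _))
    _ ≤ _ := Finset.le_sup (f := fun e : V × V => ρ e.1 e.2) (by simpa using hadj)

/-- A TSS matrix `T` on a tree `G` with rank profile `ρ` satisfies the
GIRS property with constant `c = max_{e ∈ E} ρ(e)`:
for every `A ⊆ V`, `rank T⟨Ā,A⟩ ≤ (max_{e∈E} ρ(e)) · E(A)`. -/
theorem tss_satisfies_girs {F : Type*} [Field F] {V : Type*} [Fintype V] [DecidableEq V]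
    (G : SimpleGraph V) (hG : G.IsTree) (m n : V → ℕ) (ρ : V → V → ℕ)
    (T : Matrix ((i : V) × Fin (m i)) ((j : V) × Fin (n j)) F)
    (hT : Nonempty (TSSRepr G m n ρ T)) (A : Set V) :
    (hankelBlock T A).rank ≤
      ((Finset.univ.filter (fun e : V × V => G.Adj e.1 e.2)).sup (fun e => ρ e.1 e.2))
        * edgeCount G A :=
  tss_satisfies_girs_general G hG m n ρ T hT A

end TSS
end

section
/- Let (T,G) be a graph-partitioned matrix with G = (V,E) a finite connected acyclic undirected graph. Then T admits a TSS representation on G whose rank profile is ρ(e) = rank H_e for every directed edge e, where H_e is the unit Hankel block associated with e. -/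
/-!
Factor every unit Hankel block as `H_e = L_e R_e` through `rank H_e` with `R_e` right invertible,
`R_e R'_e = 1`. Take `Out^k_i` and `Inp^k_j` to be the node-`k` blocks of `L_{(i,k)}` and
`R_{(k,j)}`, and `Trans^k_{i,j} = R_{(k,i)}⟨V_j⟩ R'_{(j,k)}`, where `V_j` is the side of `(j,k)`
containing `j`. In a forest `V_j` lies inside the side of `(k,i)`, so the columns `V_j` of
`H_{(k,i)}` form a block of `H_{(j,k)}`; hence on their common rows
`L_{(k,i)} Trans^k_{i,j} = L_{(j,k)} R_{(j,k)} R'_{(j,k)} = L_{(j,k)}`. By induction along a path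
`j − p₁ − ⋯ − i`, `Out` times the `Trans`'s is the row block `i` of `L_{(j,p₁)}`, and multiplying
by `Inp^j_{p₁}` gives the block `(i,j)` of `H_{(j,p₁)}`, which is `T⟨i,j⟩`.
-/

open Matrix

attribute [local instance] Classical.propDecidable

lemma Matrix.exists_rank_factorization {F α β : Type*} [Field F] [Fintype β] [DecidableEq β]
    (A : Matrix α β F) :
    ∃ (L : Matrix α (Fin A.rank) F) (R : Matrix (Fin A.rank) β F)
      (R' : Matrix β (Fin A.rank) F), A = L * R ∧ R * R' = 1 := by
  let e : LinearMap.range A.mulVecLin ≃ₗ[F] (Fin A.rank → F) :=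
    LinearEquiv.ofFinrankEq _ _ (by rw [Module.finrank_fin_fun]; rfl)
  let f := e.toLinearMap ∘ₗ A.mulVecLin.rangeRestrict
  obtain ⟨g, hg⟩ := f.exists_rightInverse_of_surjective
    (LinearMap.range_eq_top.2 (e.surjective.comp A.mulVecLin.surjective_rangeRestrict))
  refine ⟨LinearMap.toMatrix' ((LinearMap.range A.mulVecLin).subtype ∘ₗ e.symm.toLinearMap),
    LinearMap.toMatrix' f, LinearMap.toMatrix' g, ?_, ?_⟩
  · have hA : ((LinearMap.range A.mulVecLin).subtype ∘ₗ e.symm.toLinearMap) ∘ₗ f =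
        A.mulVecLin := LinearMap.ext fun x => by simp [f]
    rw [← LinearMap.toMatrix'_comp, hA]
    exact (LinearMap.toMatrix'_toLin' A).symm
  · rw [← LinearMap.toMatrix'_comp, hg, LinearMap.toMatrix'_id]

namespace TSS

open SimpleGraph

section Side

variable {V : Type*} {G : SimpleGraph V} {i j k : V}

lemma mem_side_self (G : SimpleGraph V) (i j : V) : i ∈ side G i j :=
  Reachable.refl i

lemma notMem_side_of_adj (hG : G.IsAcyclic) (hij : G.Adj i j) : j ∉ side G i j :=
  isBridge_iff.mp (isAcyclic_iff_forall_adj_isBridge.mp hG hij)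

lemma notMem_side_of_walk (hG : G.IsAcyclic) (hjk : G.Adj j k) (w : G.Walk k i)
    (hj : j ∉ w.support) : i ∉ side G j k := by
  have hw : ∀ e ∈ w.edges, e ∉ ({s(j, k)} : Set (Sym2 V)) := by
    rintro e he rfl
    exact hj (w.fst_mem_support_of_mem_edges he)
  exact fun hi => notMem_side_of_adj hG hjk (hi.trans (w.toDeleteEdges _ hw).reachable.symm)

lemma side_subset_side (hG : G.IsAcyclic) (hjk : G.Adj j k) (hji : j ≠ i) :
    side G j k ⊆ side G k i := by
  rintro v ⟨w⟩
  have hk : k ∉ w.support := fun hk => notMem_side_of_adj hG hjk ⟨w.takeUntil k hk⟩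
  have hw : ∀ e ∈ w.edges, e ∈ (G.deleteEdges {s(k, i)}).edgeSet := by
    intro e he
    have he' := w.edges_subset_edgeSet he
    rw [edgeSet_deleteEdges] at he' ⊢
    refine ⟨he'.1, ?_⟩
    rintro rfl
    exact hk (w.fst_mem_support_of_mem_edges he)
  have hkj : (G.deleteEdges {s(k, i)}).Adj k j :=
    ⟨hjk.symm, by simp [hji, hjk.ne]⟩
  exact hkj.reachable.trans ⟨w.transfer _ hw⟩

end Side

variable {F : Type*} [Field F] {V : Type*} [Fintype V]
  {G : SimpleGraph V} {m n : V → ℕ} {T : Matrix ((i : V) × Fin (m i)) ((j : V) × Fin (n j)) F}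

variable (G T) in
structure HankelFactorization where
  L : ∀ j k : V, Matrix {p : (i : V) × Fin (m i) // p.1 ∈ (side G j k)ᶜ}
    (Fin (unitHankel G T j k).rank) F
  R : ∀ j k : V, Matrix (Fin (unitHankel G T j k).rank)
    {q : (i : V) × Fin (n i) // q.1 ∈ side G j k} F
  rightInv : ∀ j k : V, Matrix {q : (i : V) × Fin (n i) // q.1 ∈ side G j k}
    (Fin (unitHankel G T j k).rank) F
  unitHankel_eq : ∀ j k, unitHankel G T j k = L j k * R j k
  mul_rightInv : ∀ j k, R j k * rightInv j k = 1

variable (G T) in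
theorem HankelFactorization.nonempty : Nonempty (HankelFactorization G T) := by
  choose L R R' hLR hRR' using fun j k => (unitHankel G T j k).exists_rank_factorization
  exact ⟨⟨L, R, R', hLR, hRR'⟩⟩

namespace HankelFactorization

variable (fac : HankelFactorization G T)

noncomputable def out (k i : V) : Matrix (Fin (m k)) (Fin (unitHankel G T i k).rank) F :=
  if h : k ∈ (side G i k)ᶜ then (fac.L i k).submatrix (fun a => ⟨⟨k, a⟩, h⟩) id else 0

noncomputable def inp (k j : V) : Matrix (Fin (unitHankel G T k j).rank) (Fin (n k)) F :=
  (fac.R k j).submatrix id (fun b => ⟨⟨k, b⟩, mem_side_self G k j⟩)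

noncomputable def trans (k i j : V) :
    Matrix (Fin (unitHankel G T k i).rank) (Fin (unitHankel G T j k).rank) F :=
  if h : side G j k ⊆ side G k i then
    (fac.R k i).submatrix id (fun q : {q : (l : V) × Fin (n l) // q.1 ∈ side G j k} =>
      ⟨q.1, h q.2⟩) * fac.rightInv j k
  else 0

theorem outChain_eq (hG : G.IsAcyclic) {k i : V} (w : G.Walk k i) (hw : w.IsPath) {j : V}
    (hjk : G.Adj j k) (hj : j ∉ w.support) (hi : i ∈ (side G j k)ᶜ) :
    outChain fac.out fac.trans k i w j =
      (fac.L j k).submatrix (fun a => ⟨⟨i, a⟩, hi⟩) id := by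
  induction w generalizing j with
  | nil => simp only [outChain, out, dif_pos hi]
  | @cons k v i hkv p ih =>
    rw [Walk.cons_isPath_iff] at hw
    rw [Walk.support_cons, List.mem_cons, not_or] at hj
    have hsub : side G j k ⊆ side G k v :=
      side_subset_side hG hjk fun h => hj.2 (h ▸ p.start_mem_support)
    have hvi : i ∈ (side G k v)ᶜ := notMem_side_of_walk hG hkv p hw.2
    calc outChain fac.out fac.trans k i (.cons hkv p) j
        = (fac.L k v * fac.R k v).submatrix (fun a => ⟨⟨i, a⟩, hvi⟩)
            (fun q => ⟨q.1, hsub q.2⟩) * fac.rightInv j k := by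
          rw [outChain, ih hw.1 hkv hw.2 hvi, trans, dif_pos hsub, ← Matrix.mul_assoc,
            Matrix.submatrix_mul _ _ _ id _ Function.bijective_id]
          rfl
      -- both are the block of `T` with rows `i` and columns `side G j k ⊆ side G k v`
      _ = (fac.L j k * fac.R j k).submatrix (fun a => ⟨⟨i, a⟩, hi⟩) id *
            fac.rightInv j k := by
          rw [← fac.unitHankel_eq, ← fac.unitHankel_eq]
          rfl
      _ = (fac.L j k).submatrix (fun a => ⟨⟨i, a⟩, hi⟩) id := by
          rw [Matrix.submatrix_mul _ _ _ id _ Function.bijective_id, Matrix.submatrix_id_id,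
            Matrix.mul_assoc, fac.mul_rightInv, Matrix.mul_one]

theorem blockOf_eq_pathMatrix (hG : G.IsAcyclic) {i j : V} (hij : i ≠ j) (w : G.Walk j i)
    (hw : w.IsPath) : blockOf T i j = pathMatrix fac.inp fac.trans fac.out j i w := by
  cases w with
  | nil => exact absurd rfl hij
  | @cons _ v _ hjv p =>
    rw [Walk.cons_isPath_iff] at hw
    have hi : i ∈ (side G j v)ᶜ := notMem_side_of_walk hG hjv p hw.2
    rw [pathMatrix, fac.outChain_eq hG p hw.1 hjv hw.2 hi, inp,
      ← Matrix.submatrix_mul _ _ _ id _ Function.bijective_id, ← fac.unitHankel_eq]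
    rfl

noncomputable def toTSSRepr (hG : G.IsAcyclic) :
    TSSRepr G m n (fun i j => (unitHankel G T i j).rank) T where
  D k := blockOf T k k
  Inp := fac.inp
  Trans := fac.trans
  Out := fac.out
  diag _ := rfl
  offdiag hij w hw := fac.blockOf_eq_pathMatrix hG hij w hw

end HankelFactorization

theorem tss_universality_general {F : Type*} [Field F] {V : Type*} [Fintype V]
    (G : SimpleGraph V) (hG : G.IsTree) (m n : V → ℕ)
    (T : Matrix ((i : V) × Fin (m i)) ((j : V) × Fin (n j)) F) :
    Nonempty (TSSRepr G m n (fun i j => (unitHankel G T i j).rank) T) :=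
  (HankelFactorization.nonempty G T).map (·.toTSSRepr hG.isAcyclic)

/-- universality, existence part: every graph-partitioned matrix `T` on a
tree `G` admits a TSS representation whose rank profile is `ρ(e) = rank H_e` for every
directed edge `e`, where `H_e` is the unit Hankel block associated with `e`. -/
theorem tss_universality {F : Type*} [Field F] {V : Type*} [Fintype V] [DecidableEq V]
    (G : SimpleGraph V) (hG : G.IsTree) (m n : V → ℕ)
    (T : Matrix ((i : V) × Fin (m i)) ((j : V) × Fin (n j)) F) :
    Nonempty (TSSRepr G m n (fun i j => (unitHankel G T i j).rank) T) :=
  tss_universality_general G hG m n T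

end TSS
end

section
/- Let (T,G) be a graph-partitioned matrix with G = (V,E) a finite connected acyclic undirected graph, and suppose T admits a TSS representation on G with rank profile ρ'. Then for every directed edge e of G, ρ'(e) ≥ rank H_e, where H_e is the unit Hankel block associated with e. In other words, the TSS representation with rank profile ρ(e) = rank H_e is minimal. -/
/-! Let `A` be the side of `i` once the edge `{i,j}` of the tree is cut, so that its complement
is the side of `j`. For `q ∈ A` and `p ∉ A` the unique path from `q` to `p` crosses `(i,j)`, and
cutting its transfer product there writes `T⟨p,q⟩` as (chain from `(i,j)` to `p`) times
(chain from `q` to `(i,j)`). Hence the Hankel block `T⟨Aᶜ,A⟩` factors through `F^{ρ'(i,j)}`. -/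

open Matrix

attribute [local instance] Classical.propDecidable

namespace SimpleGraph

variable {V : Type*} {G : SimpleGraph V}

theorem Walk.exists_isPath_forall_reachable_of_le {H : SimpleGraph V} (hHG : H ≤ G) {u v : V}
    (huv : H.Reachable u v) : ∃ w : G.Walk u v, w.IsPath ∧ ∀ x ∈ w.support, H.Reachable u x := by
  obtain ⟨w⟩ := huv
  refine ⟨w.bypass.mapLe hHG, w.bypass_isPath.mapLe hHG, fun x hx => ?_⟩
  rw [Walk.support_mapLe_eq_support] at hx
  exact ⟨w.bypass.takeUntil x hx⟩

theorem IsPath.append_cons {i j q p : V} {w₁ : G.Walk q i} {w₂ : G.Walk j p} (h : G.Adj i j)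
    (h₁ : w₁.IsPath) (h₂ : w₂.IsPath) (hd : w₁.support.Disjoint w₂.support) :
    (w₁.append (.cons h w₂)).IsPath := by
  rw [Walk.isPath_def, Walk.support_append, Walk.support_cons, List.tail_cons]
  exact h₁.support_nodup.append h₂.support_nodup hd

theorem Connected.reachable_deleteEdges_or (hG : G.Connected) (i j v : V) :
    (G.deleteEdges {s(i, j)}).Reachable i v ∨ (G.deleteEdges {s(i, j)}).Reachable j v := by
  suffices key : ∀ {u v : V}, G.Walk u v →
      (G.deleteEdges {s(i, j)}).Reachable i u ∨ (G.deleteEdges {s(i, j)}).Reachable j u →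
      (G.deleteEdges {s(i, j)}).Reachable i v ∨ (G.deleteEdges {s(i, j)}).Reachable j v from
    key (hG.preconnected i v).some (Or.inl .rfl)
  intro u v w
  induction w with
  | nil => exact id
  | @cons u b v hadj w ih =>
    intro hu
    apply ih
    by_cases hub : s(u, b) = s(i, j)
    · rcases Sym2.eq_iff.mp hub with ⟨rfl, rfl⟩ | ⟨rfl, rfl⟩
      · exact Or.inr .rfl
      · exact Or.inl .rfl
    · have hadj' : (G.deleteEdges {s(i, j)}).Adj u b :=
        (deleteEdges_adj ..).mpr ⟨hadj, hub⟩
      exact hu.imp (·.trans hadj'.reachable) (·.trans hadj'.reachable)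

end SimpleGraph

namespace TSS

variable {F : Type*} [Field F] {V : Type*}

/-- `transChain Trans i j k w prev` is the product `Trans^i_{j,p_{ν−1}} ⋯ Trans^{k}_{p₁,prev}`
along the walk `w : k = p₀ − p₁ − ⋯ − p_ν = i`. -/
noncomputable def transChain {G : SimpleGraph V} {ρ : V → V → ℕ}
    (Trans : ∀ k i j : V, Matrix (Fin (ρ k i)) (Fin (ρ j k)) F) (i j : V) :
    ∀ (k : V), G.Walk k i → ∀ prev : V, Matrix (Fin (ρ i j)) (Fin (ρ prev k)) F
  | _, .nil, prev => Trans i j prev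
  | k, .cons (v := k') _ w, prev => transChain Trans i j k' w k * Trans k k' prev

/-- `inChain Inp Trans i j k w` is the product `Trans^i_{j,p_{ν−1}} ⋯ Trans^{p₁}_{p₂,k} · Inp^k_{p₁}`
along the walk `w : k = p₀ − p₁ − ⋯ − p_ν = i`: the state that the input at `k` leaves on the
directed edge `(i,j)`. -/
noncomputable def inChain {G : SimpleGraph V} {n : V → ℕ} {ρ : V → V → ℕ}
    (Inp : ∀ k j : V, Matrix (Fin (ρ k j)) (Fin (n k)) F)
    (Trans : ∀ k i j : V, Matrix (Fin (ρ k i)) (Fin (ρ j k)) F) (i j : V) :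
    ∀ (k : V), G.Walk k i → Matrix (Fin (ρ i j)) (Fin (n k)) F
  | _, .nil => Inp i j
  | k, .cons (v := k') _ w => transChain Trans i j k' w k * Inp k k'

section Chains

variable {G : SimpleGraph V} {m n : V → ℕ} {ρ : V → V → ℕ}
  (Inp : ∀ k j : V, Matrix (Fin (ρ k j)) (Fin (n k)) F)
  (Trans : ∀ k i j : V, Matrix (Fin (ρ k i)) (Fin (ρ j k)) F)
  (Out : ∀ k i : V, Matrix (Fin (m k)) (Fin (ρ i k)) F)
  {i j p : V} (h : G.Adj i j) (w₂ : G.Walk j p)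

theorem outChain_append_cons_s2 {k : V} (w₁ : G.Walk k i) (prev : V) :
    outChain Out Trans k p (w₁.append (.cons h w₂)) prev
      = outChain Out Trans j p w₂ i * transChain Trans i j k w₁ prev := by
  induction w₁ generalizing prev with
  | nil => rfl
  | cons _ w ih =>
    simp only [SimpleGraph.Walk.cons_append, outChain, transChain, ih, Matrix.mul_assoc]

theorem pathMatrix_append_cons_s2 {q : V} (w₁ : G.Walk q i) :
    pathMatrix Inp Trans Out q p (w₁.append (.cons h w₂))
      = outChain Out Trans j p w₂ i * inChain Inp Trans i j q w₁ := by
  cases w₁ with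
  | nil => rfl
  | cons _ w =>
    simp only [SimpleGraph.Walk.cons_append, pathMatrix, inChain,
      outChain_append_cons_s2 Trans Out h w₂, Matrix.mul_assoc]

end Chains

theorem rank_hankelBlock_le_of_forall_blockOf_eq_mul [Fintype V] {m n : V → ℕ}
    {T : Matrix ((i : V) × Fin (m i)) ((j : V) × Fin (n j)) F} {A : Set V}
    {ι : Type*} [Fintype ι] (L : ∀ p ∈ Aᶜ, Matrix (Fin (m p)) ι F)
    (R : ∀ q ∈ A, Matrix ι (Fin (n q)) F)
    (hLR : ∀ p (hp : p ∈ Aᶜ) q (hq : q ∈ A), blockOf T p q = L p hp * R q hq) :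
    (hankelBlock T A).rank ≤ Fintype.card ι := by
  let L' : Matrix {x : (i : V) × Fin (m i) // x.1 ∈ Aᶜ} ι F := fun x => L x.1.1 x.2 x.1.2
  let R' : Matrix ι {y : (j : V) × Fin (n j) // y.1 ∈ A} F := fun c y => R y.1.1 y.2 c y.1.2
  have hfac : hankelBlock T A = L' * R' := by
    ext ⟨⟨p, a⟩, hp⟩ ⟨⟨q, b⟩, hq⟩
    exact congrFun (congrFun (hLR p hp q hq) a) b
  rw [hfac]
  exact (rank_mul_le_left L' R').trans (rank_le_card_width L')

section Side

variable {G : SimpleGraph V} {i j : V}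

theorem compl_side (hG : G.Connected) (hb : G.IsBridge s(i, j)) :
    (side G i j)ᶜ = side G j i := by
  ext v
  simp only [side, Set.mem_compl_iff, Set.mem_ofPred_eq, Sym2.eq_swap (a := j)]
  refine ⟨(hG.reachable_deleteEdges_or i j v).resolve_left, fun hjv hiv => ?_⟩
  exact SimpleGraph.isBridge_iff.mp hb (hiv.trans hjv.symm)

theorem exists_isPath_of_mem_side {v : V} (hv : v ∈ side G i j) :
    ∃ w : G.Walk i v, w.IsPath ∧ ∀ x ∈ w.support, x ∈ side G i j :=
  SimpleGraph.Walk.exists_isPath_forall_reachable_of_le (SimpleGraph.deleteEdges_le _) hv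

end Side

theorem tss_minimality_general {F : Type*} [Field F] {V : Type*} [Fintype V]
    (G : SimpleGraph V) (hG : G.IsTree) (m n : V → ℕ) (ρ' : V → V → ℕ)
    (T : Matrix ((i : V) × Fin (m i)) ((j : V) × Fin (n j)) F)
    (hT : Nonempty (TSSRepr G m n ρ' T)) :
    ∀ i j : V, G.Adj i j → (unitHankel G T i j).rank ≤ ρ' i j := by
  obtain ⟨R⟩ := hT
  intro i j hij
  have hcompl : (side G i j)ᶜ = side G j i :=
    compl_side hG.connected (SimpleGraph.isAcyclic_iff_forall_adj_isBridge.mp hG.isAcyclic hij)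
  choose wq hwq hwqA using fun q (hq : q ∈ side G i j) => exists_isPath_of_mem_side hq
  choose wp hwp hwpA using fun p (hp : p ∈ (side G i j)ᶜ) =>
    exists_isPath_of_mem_side (hcompl ▸ hp)
  refine (rank_hankelBlock_le_of_forall_blockOf_eq_mul
    (fun p hp => outChain R.Out R.Trans j p (wp p hp) i)
    (fun q hq => inChain R.Inp R.Trans i j q (wq q hq).reverse) ?_).trans_eq (Fintype.card_fin _)
  intro p hp q hq
  have hpath : ((wq q hq).reverse.append (.cons hij (wp p hp))).IsPath :=
    SimpleGraph.IsPath.append_cons hij (hwq q hq).reverse (hwp p hp) fun x hxq hxp =>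
      hcompl.symm ▸ hwpA p hp x hxp <| hwqA q hq x (by simpa using hxq)
  rw [R.offdiag (by rintro rfl; exact hp hq) _ hpath, pathMatrix_append_cons_s2]

/-- minimality: if `T` admits a TSS representation on the tree `G` with
rank profile `ρ'`, then `ρ'(e) ≥ rank H_e` for every directed edge `e` of `G`. -/
theorem tss_minimality {F : Type*} [Field F] {V : Type*} [Fintype V] [DecidableEq V]
    (G : SimpleGraph V) (hG : G.IsTree) (m n : V → ℕ) (ρ' : V → V → ℕ)
    (T : Matrix ((i : V) × Fin (m i)) ((j : V) × Fin (n j)) F)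
    (hT : Nonempty (TSSRepr G m n ρ' T)) :
    ∀ i j : V, G.Adj i j → (unitHankel G T i j).rank ≤ ρ' i j :=
  tss_minimality_general G hG m n ρ' T hT

end TSS
end

section
/- Let T₁, T₂ ∈ F^{M×N}, with M = Σ_{i∈V} m_i and N = Σ_{i∈V} n_i, be TSS matrices on the same finite connected acyclic undirected graph G = (V,E) with rank profiles ρ₁ and ρ₂ respectively. Then T₃ = T₁ + T₂ admits a TSS representation on G with rank profile e ↦ ρ₁(e) + ρ₂(e). -/
open Matrix

attribute [local instance] Classical.propDecidable

namespace TSS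

variable {F : Type*} [Field F] {V : Type*} [Fintype V] [DecidableEq V]

/-! The direct sum of two representations represents the sum: concatenate the edge state
spaces, stack the input matrices, place the output matrices side by side and make the
transition matrices block diagonal. The product along any path then splits into the two
original products. -/

section

omit [Fintype V] [DecidableEq V]

variable {G : SimpleGraph V} {m n : V → ℕ} {ρ₁ ρ₂ : V → V → ℕ}

def sumInp (Inp₁ : ∀ k j : V, Matrix (Fin (ρ₁ k j)) (Fin (n k)) F)
    (Inp₂ : ∀ k j : V, Matrix (Fin (ρ₂ k j)) (Fin (n k)) F) :
    ∀ k j : V, Matrix (Fin (ρ₁ k j + ρ₂ k j)) (Fin (n k)) F :=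
  fun k j => (fromRows (Inp₁ k j) (Inp₂ k j)).submatrix finSumFinEquiv.symm id

def sumTrans (Trans₁ : ∀ k i j : V, Matrix (Fin (ρ₁ k i)) (Fin (ρ₁ j k)) F)
    (Trans₂ : ∀ k i j : V, Matrix (Fin (ρ₂ k i)) (Fin (ρ₂ j k)) F) :
    ∀ k i j : V, Matrix (Fin (ρ₁ k i + ρ₂ k i)) (Fin (ρ₁ j k + ρ₂ j k)) F :=
  fun k i j => (fromBlocks (Trans₁ k i j) 0 0 (Trans₂ k i j)).submatrix
    finSumFinEquiv.symm finSumFinEquiv.symm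

def sumOut (Out₁ : ∀ k i : V, Matrix (Fin (m k)) (Fin (ρ₁ i k)) F)
    (Out₂ : ∀ k i : V, Matrix (Fin (m k)) (Fin (ρ₂ i k)) F) :
    ∀ k i : V, Matrix (Fin (m k)) (Fin (ρ₁ i k + ρ₂ i k)) F :=
  fun k i => (fromCols (Out₁ k i) (Out₂ k i)).submatrix id finSumFinEquiv.symm

section

variable {Inp₁ : ∀ k j : V, Matrix (Fin (ρ₁ k j)) (Fin (n k)) F}
  {Inp₂ : ∀ k j : V, Matrix (Fin (ρ₂ k j)) (Fin (n k)) F}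
  {Trans₁ : ∀ k i j : V, Matrix (Fin (ρ₁ k i)) (Fin (ρ₁ j k)) F}
  {Trans₂ : ∀ k i j : V, Matrix (Fin (ρ₂ k i)) (Fin (ρ₂ j k)) F}
  {Out₁ : ∀ k i : V, Matrix (Fin (m k)) (Fin (ρ₁ i k)) F}
  {Out₂ : ∀ k i : V, Matrix (Fin (m k)) (Fin (ρ₂ i k)) F}

theorem outChain_sum {k i : V} (w : G.Walk k i) (j : V) :
    outChain (sumOut Out₁ Out₂) (sumTrans Trans₁ Trans₂) k i w j =
      (fromCols (outChain Out₁ Trans₁ k i w j) (outChain Out₂ Trans₂ k i w j)).submatrix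
        id finSumFinEquiv.symm := by
  induction w generalizing j with
  | nil => rfl
  | cons _ w ih =>
    rw [outChain, outChain, outChain, ih, sumTrans, submatrix_mul_equiv,
      fromCols_mul_fromBlocks]
    simp only [Matrix.mul_zero, add_zero, zero_add]

theorem pathMatrix_sum {j i : V} (w : G.Walk j i) :
    pathMatrix (sumInp Inp₁ Inp₂) (sumTrans Trans₁ Trans₂) (sumOut Out₁ Out₂) j i w =
      pathMatrix Inp₁ Trans₁ Out₁ j i w + pathMatrix Inp₂ Trans₂ Out₂ j i w := by
  cases w with
  | nil => simp only [pathMatrix, add_zero]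
  | cons _ w =>
    rw [pathMatrix, pathMatrix, pathMatrix, outChain_sum, sumInp, submatrix_mul_equiv,
      fromCols_mul_fromRows]
    rfl

end

theorem blockOf_add (T₁ T₂ : Matrix ((i : V) × Fin (m i)) ((j : V) × Fin (n j)) F) (i j : V) :
    blockOf (T₁ + T₂) i j = blockOf T₁ i j + blockOf T₂ i j :=
  rfl

def TSSRepr.add {T₁ T₂ : Matrix ((i : V) × Fin (m i)) ((j : V) × Fin (n j)) F}
    (R₁ : TSSRepr G m n ρ₁ T₁) (R₂ : TSSRepr G m n ρ₂ T₂) :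
    TSSRepr G m n (fun i j => ρ₁ i j + ρ₂ i j) (T₁ + T₂) where
  D k := R₁.D k + R₂.D k
  Inp := sumInp R₁.Inp R₂.Inp
  Trans := sumTrans R₁.Trans R₂.Trans
  Out := sumOut R₁.Out R₂.Out
  diag i := by rw [blockOf_add, R₁.diag, R₂.diag]
  offdiag hij w hw := by
    rw [blockOf_add, R₁.offdiag hij w hw, R₂.offdiag hij w hw, pathMatrix_sum]

end

theorem tss_add_general {F : Type*} [Field F] {V : Type*}
    (G : SimpleGraph V) (m n : V → ℕ) (ρ₁ ρ₂ : V → V → ℕ)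
    (T₁ T₂ : Matrix ((i : V) × Fin (m i)) ((j : V) × Fin (n j)) F)
    (h₁ : Nonempty (TSSRepr G m n ρ₁ T₁)) (h₂ : Nonempty (TSSRepr G m n ρ₂ T₂)) :
    Nonempty (TSSRepr G m n (fun i j => ρ₁ i j + ρ₂ i j) (T₁ + T₂)) := by
  obtain ⟨R₁⟩ := h₁
  obtain ⟨R₂⟩ := h₂
  exact ⟨R₁.add R₂⟩

/-- TSS addition: if `T₁, T₂` are TSS matrices on the same tree `G` with
rank profiles `ρ₁, ρ₂`, then `T₁ + T₂` admits a TSS representation on `G` with rank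
profile `e ↦ ρ₁(e) + ρ₂(e)`. -/
theorem tss_add {F : Type*} [Field F] {V : Type*} [Fintype V] [DecidableEq V]
    (G : SimpleGraph V) (hG : G.IsTree) (m n : V → ℕ) (ρ₁ ρ₂ : V → V → ℕ)
    (T₁ T₂ : Matrix ((i : V) × Fin (m i)) ((j : V) × Fin (n j)) F)
    (h₁ : Nonempty (TSSRepr G m n ρ₁ T₁)) (h₂ : Nonempty (TSSRepr G m n ρ₂ T₂)) :
    Nonempty (TSSRepr G m n (fun i j => ρ₁ i j + ρ₂ i j) (T₁ + T₂)) :=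
  tss_add_general G m n ρ₁ ρ₂ T₁ T₂ h₁ h₂

end TSS
end

section
/- Let T ∈ F^{N×N} be an invertible matrix whose rows and columns are partitioned identically by a finite index set V (index set I = ⨆_{i∈V} I_i for both rows and columns). Then for every subset A ⊆ V with Ā = V∖A, the Hankel block of the inverse has the same rank as the corresponding Hankel block of T: rank (T⁻¹)⟨Ā,A⟩ = rank T⟨Ā,A⟩. -/
/-! Let `P` be the space of vectors supported on `A`. Extension by zero identifies the kernel of
`T⟨Ā,A⟩` with `P ∩ T⁻¹P` and that of `T⁻¹⟨Ā,A⟩` with `P ∩ TP`, and `T` maps the former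
isomorphically onto the latter. The two blocks therefore have the same nullity, and having the
same number of columns, the same rank. -/

open Matrix

attribute [local instance] Classical.propDecidable

namespace TSS

variable {F : Type*} [Field F] {V : Type*} [Fintype V] [DecidableEq V]

section

open LinearMap Module Function

theorem _root_.LinearEquiv.finrank_inf_comap_eq_finrank_inf_comap_symm {R M : Type*} [Ring R]
    [AddCommGroup M] [Module R M] (e : M ≃ₗ[R] M) (P : Submodule R M) :
    finrank R ↥(P ⊓ P.comap (e : M →ₗ[R] M)) =
      finrank R ↥(P ⊓ P.comap (e.symm : M →ₗ[R] M)) := by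
  rw [← e.finrank_map_eq, Submodule.map_inf _ e.injective,
    Submodule.map_comap_eq_of_surjective e.surjective, Submodule.map_equiv_eq_comap_symm, inf_comm]

theorem _root_.Matrix.submatrix_mulVecLin_of_injective {R l m n ι : Type*} [CommSemiring R]
    [Fintype n] [Fintype ι] (U : Matrix l ι R) (r : m → l) {c : n → ι} (hc : Injective c) :
    (U.submatrix r c).mulVecLin =
      funLeft R R r ∘ₗ U.mulVecLin ∘ₗ ExtendByZero.linearMap R c := by
  ext x i
  exact Fintype.sum_of_injective c hc _ _ (fun j hj => by simp [extend_apply' _ _ _ hj])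
    (fun k => by simp [hc.extend_apply])

variable {K ι : Type*} [Field K]

theorem _root_.Matrix.rank_eq_rank_of_finrank_ker_eq {m m' n : Type*} [Fintype n] {A : Matrix m n K}
    {B : Matrix m' n K} (h : finrank K (ker A.mulVecLin) = finrank K (ker B.mulVecLin)) :
    A.rank = B.rank := by
  have hA := finrank_range_add_finrank_ker A.mulVecLin
  have hB := finrank_range_add_finrank_ker B.mulVecLin
  rw [Matrix.rank, Matrix.rank]
  omega

variable (K) in
theorem _root_.Matrix.ker_funLeft_compl_eq_range_extendByZero (S : Set ι) :
    ker (funLeft K K ((↑) : ↥Sᶜ → ι)) = range (ExtendByZero.linearMap K ((↑) : S → ι)) := by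
  ext v
  constructor
  · intro hv
    refine ⟨v ∘ (↑), funext fun r => ?_⟩
    by_cases hr : r ∈ S
    · exact Subtype.val_injective.extend_apply _ _ ⟨r, hr⟩
    · rw [ExtendByZero.linearMap_apply, extend_apply' _ _ _ fun ⟨a, ha⟩ => hr (ha ▸ a.2)]
      exact (congrFun hv ⟨r, hr⟩).symm
  · rintro ⟨x, rfl⟩
    exact funext fun p => extend_apply' _ _ _ fun ⟨a, ha⟩ => p.2 (ha ▸ a.2)

theorem _root_.Matrix.finrank_ker_submatrix_compl [Fintype ι] (U : Matrix ι ι K) (S : Set ι)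
    [Fintype S] :
    finrank K (ker (U.submatrix ((↑) : ↥Sᶜ → ι) ((↑) : S → ι)).mulVecLin) =
      finrank K ↥(ker (funLeft K K ((↑) : ↥Sᶜ → ι)) ⊓
        (ker (funLeft K K ((↑) : ↥Sᶜ → ι))).comap U.mulVecLin) := by
  rw [submatrix_mulVecLin_of_injective _ _ Subtype.val_injective, ker_comp, Submodule.comap_comp,
    (Submodule.equivMapOfInjective (ExtendByZero.linearMap K _)
      (extend_injective Subtype.val_injective (0 : ι → K)) _).finrank_eq,
    Submodule.map_comap_eq,
    ← ker_funLeft_compl_eq_range_extendByZero]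

theorem _root_.Matrix.rank_submatrix_compl_nonsing_inv [Fintype ι] [DecidableEq ι]
    (U : Matrix ι ι K) (hU : IsUnit U) (S : Set ι) [Fintype S] :
    (U⁻¹.submatrix ((↑) : ↥Sᶜ → ι) ((↑) : S → ι)).rank =
      (U.submatrix ((↑) : ↥Sᶜ → ι) ((↑) : S → ι)).rank := by
  have hdet := (isUnit_iff_isUnit_det U).mp hU
  let e : (ι → K) ≃ₗ[K] (ι → K) := LinearEquiv.ofLinearMap U.mulVecLin U⁻¹.mulVecLin
    (by rw [← mulVecLin_mul, mul_nonsing_inv U hdet, mulVecLin_one])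
    (by rw [← mulVecLin_mul, nonsing_inv_mul U hdet, mulVecLin_one])
  refine rank_eq_rank_of_finrank_ker_eq ?_
  rw [finrank_ker_submatrix_compl, finrank_ker_submatrix_compl]
  exact (e.finrank_inf_comap_eq_finrank_inf_comap_symm _).symm

end

/-- for an invertible block-partitioned matrix `T` (identical row and column
partitions) and every `A ⊆ V`, `rank (T⁻¹)⟨Ā,A⟩ = rank T⟨Ā,A⟩`. -/
theorem inverse_hankel_rank {F : Type*} [Field F] {V : Type*} [Fintype V] [DecidableEq V]
    (n : V → ℕ)
    (T : Matrix ((i : V) × Fin (n i)) ((j : V) × Fin (n j)) F)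
    (hT : IsUnit T) (A : Set V) :
    (hankelBlock T⁻¹ A).rank = (hankelBlock T A).rank :=
  T.rank_submatrix_compl_nonsing_inv hT {p | p.1 ∈ A}

end TSS
end

section
/- Let G = (V,E) be a finite undirected graph, and let T₁ ∈ F^{M×N} and T₂ ∈ F^{N×P} be graph-partitioned matrices over G such that the column block partition of T₁ equals the row block partition of T₂. If (T₁,G) satisfies the GIRS property with constant c₁ and (T₂,G) satisfies the GIRS property with constant c₂, then (T₁T₂, G) satisfies the GIRS property with constant c₁ + c₂; that is, rank (T₁T₂)⟨Ā,A⟩ ≤ (c₁+c₂) · E(A) for all A ⊆ V. -/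
open Matrix

attribute [local instance] Classical.propDecidable

namespace TSS

variable {F : Type*} [Field F] {V : Type*} [Fintype V] [DecidableEq V]

theorem _root_.Matrix.rank_add_le_s12 {F α β : Type*} [Field F] [Fintype β] (A B : Matrix α β F) :
    (A + B).rank ≤ A.rank + B.rank := by
  rw [Matrix.rank, Matrix.rank, Matrix.rank, Matrix.mulVecLin_add]
  exact (Submodule.finrank_mono (LinearMap.range_add_le _ _)).trans
    (Submodule.finrank_add_le_finrank_add_finrank _ _)

theorem _root_.Matrix.rank_toBlock_mul_le {F l m n : Type*} [Field F] [Fintype m] [Fintype n]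
    (M : Matrix l m F) (N : Matrix m n F) (q : l → Prop) (s : m → Prop) [DecidablePred s]
    (r : n → Prop) :
    ((M * N).toBlock q r).rank ≤ (M.toBlock q s).rank + (N.toBlock (fun j => ¬s j) r).rank := by
  rw [Matrix.toBlock_mul_eq_add q s r]
  exact (Matrix.rank_add_le_s12 _ _).trans <|
    add_le_add (Matrix.rank_mul_le_left _ _) (Matrix.rank_mul_le_right _ _)

theorem girs_mul_general {F : Type*} [Field F] {V : Type*} [Fintype V]
    (G : SimpleGraph V) (m n p : V → ℕ) (c₁ c₂ : ℕ)
    (T₁ : Matrix ((i : V) × Fin (m i)) ((j : V) × Fin (n j)) F)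
    (T₂ : Matrix ((i : V) × Fin (n i)) ((j : V) × Fin (p j)) F)
    (h₁ : ∀ A : Set V, (hankelBlock T₁ A).rank ≤ c₁ * edgeCount G A)
    (h₂ : ∀ A : Set V, (hankelBlock T₂ A).rank ≤ c₂ * edgeCount G A) :
    ∀ A : Set V, (hankelBlock (T₁ * T₂) A).rank ≤ (c₁ + c₂) * edgeCount G A := by
  intro A
  calc (hankelBlock (T₁ * T₂) A).rank
      ≤ (hankelBlock T₁ A).rank + (hankelBlock T₂ A).rank :=
        Matrix.rank_toBlock_mul_le T₁ T₂ _ (fun j => j.1 ∈ A) _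
    _ ≤ c₁ * edgeCount G A + c₂ * edgeCount G A := add_le_add (h₁ A) (h₂ A)
    _ = (c₁ + c₂) * edgeCount G A := (add_mul _ _ _).symm

/-- if `(T₁,G)` and `(T₂,G)` satisfy the GIRS property with constants
`c₁` and `c₂` (the column partition of `T₁` equal to the row partition of `T₂`, `G` any
finite graph), then `(T₁T₂,G)` satisfies the GIRS property with constant `c₁ + c₂`. -/
theorem girs_mul {F : Type*} [Field F] {V : Type*} [Fintype V] [DecidableEq V]
    (G : SimpleGraph V) (m n p : V → ℕ) (c₁ c₂ : ℕ)
    (T₁ : Matrix ((i : V) × Fin (m i)) ((j : V) × Fin (n j)) F)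
    (T₂ : Matrix ((i : V) × Fin (n i)) ((j : V) × Fin (p j)) F)
    (h₁ : ∀ A : Set V, (hankelBlock T₁ A).rank ≤ c₁ * edgeCount G A)
    (h₂ : ∀ A : Set V, (hankelBlock T₂ A).rank ≤ c₂ * edgeCount G A) :
    ∀ A : Set V, (hankelBlock (T₁ * T₂) A).rank ≤ (c₁ + c₂) * edgeCount G A :=
  girs_mul_general G m n p c₁ c₂ T₁ T₂ h₁ h₂

end TSS
end

section
/- Let G = (V,E) be a finite undirected graph and let T ∈ F^{N×N} be an invertible graph-partitioned matrix over G whose row and column block partitions coincide. If (T,G) satisfies the GIRS property with constant c, then (T⁻¹,G) also satisfies the GIRS property with the same constant c; that is, rank (T⁻¹)⟨Ā,A⟩ ≤ c · E(A) for all A ⊆ V. -/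
/-!
If `L` is an automorphism of `W` and `S = ker π`, the kernel of the corner `π ∘ L|_S` is
`S ∩ L⁻¹S`, which `L` maps isomorphically onto `LS ∩ S`, the kernel of the corner of `L⁻¹`.
By rank–nullity the two corners have the same rank (the nullity theorem). Taking for `S` the
vectors supported on the blocks of `A` and for `π` the restriction to the blocks of `Ā`, the
corners are the Hankel blocks `T⟨Ā,A⟩` and `T⁻¹⟨Ā,A⟩`, so every Hankel block of `T⁻¹` has the
rank of the corresponding one of `T`.
-/

open Matrix

attribute [local instance] Classical.propDecidable

namespace TSS

variable {F : Type*} [Field F] {V : Type*} [Fintype V] [DecidableEq V]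

section NullityTheorem

open Module LinearMap

variable {K W W' Z : Type*} [DivisionRing K] [AddCommGroup W] [Module K W] [FiniteDimensional K W]
  [AddCommGroup W'] [Module K W'] [AddCommGroup Z] [Module K Z]

lemma finrank_range_comp_subtype_add_finrank_map_inf_ker (f : W →ₗ[K] W')
    (hf : Function.Injective f) (π : W' →ₗ[K] Z) (S : Submodule K W) :
    finrank K (range (π ∘ₗ f ∘ₗ S.subtype)) + finrank K ↥(S.map f ⊓ ker π) = finrank K S := by
  have hfS : Function.Injective (f ∘ₗ S.subtype) := hf.comp S.injective_subtype
  have hker : (ker (π ∘ₗ f ∘ₗ S.subtype)).map (f ∘ₗ S.subtype) = S.map f ⊓ ker π := by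
    rw [ker_comp, Submodule.map_comap_eq, range_comp, Submodule.range_subtype]
  rw [← finrank_range_add_finrank_ker (π ∘ₗ f ∘ₗ S.subtype), ← hker,
    (Submodule.equivMapOfInjective _ hfS _).finrank_eq]

theorem finrank_range_comp_symm_comp_subtype_ker (L : W ≃ₗ[K] W) (π : W →ₗ[K] Z) :
    finrank K (range (π ∘ₗ (L.symm : W →ₗ[K] W) ∘ₗ (ker π).subtype)) =
      finrank K (range (π ∘ₗ (L : W →ₗ[K] W) ∘ₗ (ker π).subtype)) := by
  have hsymm := finrank_range_comp_subtype_add_finrank_map_inf_ker _ L.symm.injective π (ker π)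
  have hL := finrank_range_comp_subtype_add_finrank_map_inf_ker _ L.injective π (ker π)
  have hinf : finrank K ↥((ker π).map (L.symm : W →ₗ[K] W) ⊓ ker π) =
      finrank K ↥((ker π).map (L : W →ₗ[K] W) ⊓ ker π) := by
    rw [← L.finrank_map_eq, Submodule.map_inf _ L.injective, inf_comm,
      (Submodule.map_symm_eq_iff L).mp rfl]
  omega

end NullityTheorem

section HankelBlock

open Module LinearMap

variable {ι : Type*} [Fintype ι]

lemma rank_submatrix_compl_eq_finrank_range (M : Matrix ι ι F) (A : Set ι) :
    (M.submatrix (Subtype.val : ↥Aᶜ → ι) (Subtype.val : ↥A → ι)).rank =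
      finrank F (range (funLeft F F (Subtype.val : ↥Aᶜ → ι) ∘ₗ M.mulVecLin ∘ₗ
        (ker (funLeft F F (Subtype.val : ↥Aᶜ → ι))).subtype)) := by
  set π := funLeft F F (Subtype.val : ↥Aᶜ → ι)
  have hfactor : π ∘ₗ M.mulVecLin ∘ₗ (ker π).subtype =
      (M.submatrix Subtype.val Subtype.val).mulVecLin ∘ₗ
        funLeft F F (Subtype.val : ↥A → ι) ∘ₗ (ker π).subtype := by
    ext ⟨v, hv⟩ i
    have hv_compl : ∀ j : ↥Aᶜ, v j = 0 := fun j => congrFun hv j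
    simp only [coe_comp, Function.comp_apply, Submodule.coe_subtype, Matrix.mulVecLin_apply,
      funLeft_apply, π, Matrix.mulVec, dotProduct, Matrix.submatrix_apply]
    rw [← Fintype.sum_subtype_add_sum_subtype (· ∈ A)]
    simp [hv_compl]
  have hsurj : range (funLeft F F (Subtype.val : ↥A → ι) ∘ₗ (ker π).subtype) = ⊤ := by
    refine eq_top_iff.mpr fun x _ => ⟨⟨fun j => if h : j ∈ A then x ⟨j, h⟩ else 0, ?_⟩, ?_⟩
    · ext ⟨j, hj⟩
      simp [π, funLeft_apply, show j ∉ A from hj]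
    · ext ⟨j, hj⟩
      simp [funLeft_apply, hj]
  rw [Matrix.rank, hfactor, range_comp_of_range_eq_top _ hsurj]

theorem rank_submatrix_compl_nonsing_inv [DecidableEq ι] (T : Matrix ι ι F) (hT : IsUnit T)
    (A : Set ι) :
    (T⁻¹.submatrix (Subtype.val : ↥Aᶜ → ι) (Subtype.val : ↥A → ι)).rank =
      (T.submatrix (Subtype.val : ↥Aᶜ → ι) (Subtype.val : ↥A → ι)).rank := by
  let hTinv := hT.invertible
  have hsymm : ((T.toLinearEquiv' hTinv).symm : (ι → F) →ₗ[F] (ι → F)) = T⁻¹.mulVecLin := by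
    rw [Matrix.toLinearEquiv'_symm_apply, Matrix.invOf_eq_nonsing_inv]; rfl
  rw [rank_submatrix_compl_eq_finrank_range, rank_submatrix_compl_eq_finrank_range, ← hsymm]
  exact finrank_range_comp_symm_comp_subtype_ker _ _

end HankelBlock

/-- if `T` is invertible (identical row and column block partitions) and
`(T,G)` satisfies the GIRS property with constant `c` (`G` any finite graph), then
`(T⁻¹,G)` satisfies the GIRS property with the same constant `c`. -/
theorem girs_inv {F : Type*} [Field F] {V : Type*} [Fintype V] [DecidableEq V]
    (G : SimpleGraph V) (n : V → ℕ) (c : ℕ)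
    (T : Matrix ((i : V) × Fin (n i)) ((j : V) × Fin (n j)) F)
    (hT : IsUnit T)
    (h : ∀ A : Set V, (hankelBlock T A).rank ≤ c * edgeCount G A) :
    ∀ A : Set V, (hankelBlock T⁻¹ A).rank ≤ c * edgeCount G A := by
  intro A
  calc (hankelBlock T⁻¹ A).rank = (hankelBlock T A).rank :=
        rank_submatrix_compl_nonsing_inv T hT {p | p.1 ∈ A}
    _ ≤ c * edgeCount G A := h A

end TSS
end
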